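/- There exists a space Y in the class HS such that the square Y × Y is pseudocompact. -/

import Mathlib

open Filter Topology

/-- A topological space is pseudocompact if every continuous real-valued function on it
is bounded. -/
def Pseudocompact (X : Type*) [TopologicalSpace X] : Prop :=
  ∀ f : X → ℝ, Continuous f → ∃ M : ℝ, ∀ x, |f x| ≤ M

/-- An ultrafilter on `ℕ` is free if it is not principal. -/
def IsFreeUltrafilter (u : Ultrafilter ℕ) : Prop := ∀ n : ℕ, u ≠ pure n

/-- A subset `X` of `βℕ` (realized as `Ultrafilter ℕ` with its usual compact topology,
`ℕ` being identified with the principal ultrafilters via `pure`) is in the class HS if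
there is an assignment `A ↦ u_A` of a free ultrafilter containing `A` to each infinite
`A ⊆ ℕ` such that `X = ℕ ∪ {u_A : A infinite}`. -/
def IsHS (X : Set (Ultrafilter ℕ)) : Prop :=
  ∃ u : Set ℕ → Ultrafilter ℕ,
    (∀ A : Set ℕ, A.Infinite → A ∈ u A ∧ IsFreeUltrafilter (u A)) ∧
    X = Set.range (pure : ℕ → Ultrafilter ℕ) ∪ {v | ∃ A : Set ℕ, A.Infinite ∧ v = u A}

/-!
Fix a free ultrafilter `w` on `ℕ`. Every sequence in `ℕ × ℕ`, say `k ↦ (m k, n k)`, converges along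
`w` to `(w.map m, w.map n)` in `βℕ × βℕ`; so if `Y` contains `ℕ` and all `w.map m`, then every
sequence in the dense set `ℕ × ℕ` has a cluster point in `Y × Y`, which makes `Y × Y`
pseudocompact. There are only `𝔠` such ultrafilters `w.map m`, while every ultrafilter has `𝔠`
members; a greedy transfinite choice therefore picks pairwise distinct `A_v ∈ v` for the free ones,
and setting `u_{A_v} := v` extends to an HS space containing them all.
-/

universe u

open Set Cardinal Function

theorem Cardinal.exists_injective_forall_mem {ι α : Type u} (S : ι → Set α)
    (hS : ∀ i, #ι ≤ #(S i)) : ∃ f : ι → α, Injective f ∧ ∀ i, f i ∈ S i := by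
  -- In a well-order of type `(#ι).ord`, each initial segment has fewer than `#ι` elements,
  -- so a greedy choice along it never runs out of fresh elements.
  obtain ⟨_, _, hord⟩ := exists_ord_eq_type_lt ι
  have fresh : ∀ i (prev : ∀ t, t < i → α), ∃ a ∈ S i, ∀ t ht, prev t ht ≠ a := by
    intro i prev
    have hlt : #(range fun t : Iio i => prev t t.2) < #(S i) :=
      (mk_range_le.trans_lt (mk_Iio_lt i hord)).trans_le (hS i)
    obtain ⟨a, ha, hnew⟩ := sdiff_nonempty_of_mk_lt_mk hlt
    exact ⟨a, ha, fun t ht h => hnew ⟨⟨t, ht⟩, h⟩⟩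
  choose g hgS hgnew using fresh
  set f : ι → α := wellFounded_lt.fix g
  have hf : ∀ i, f i = g i fun t _ => f t := wellFounded_lt.fix_eq g
  refine ⟨f, fun i j hij => ?_, fun i => hf i ▸ hgS _ _⟩
  by_contra hne
  rcases lt_or_gt_of_ne hne with h | h
  · exact hgnew j (fun t _ => f t) i h (hij.trans (hf j))
  · exact hgnew i (fun t _ => f t) j h (hij.symm.trans (hf i))

theorem Ultrafilter.mk_set_le_mk_setOf_mem {α : Type*} [Infinite α] (u : Ultrafilter α) :
    #(Set α) ≤ #{s : Set α | s ∈ u} := by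
  by_contra! hlt
  have hcover : (univ : Set (Set α)) ⊆ {s | s ∈ u} ∪ compl ⁻¹' {s | s ∈ u} :=
    fun s _ => u.mem_or_compl_mem s
  have hcompl : #(compl ⁻¹' {s : Set α | s ∈ u}) ≤ #{s : Set α | s ∈ u} :=
    mk_preimage_of_injective _ _ compl_injective
  have := calc #(Set α) = #(univ : Set (Set α)) := mk_univ.symm
    _ ≤ #{s : Set α | s ∈ u} + #{s : Set α | s ∈ u} :=
      (mk_le_mk_of_subset hcover).trans ((mk_union_le _ _).trans (add_le_add le_rfl hcompl))
  exact this.not_gt (add_lt_of_lt (aleph0_le_mk _) hlt hlt)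

theorem isFreeUltrafilter_iff_le_cofinite {u : Ultrafilter ℕ} :
    IsFreeUltrafilter u ↔ (u : Filter ℕ) ≤ cofinite := by
  refine ⟨fun h => (u.le_cofinite_or_eq_pure).resolve_right fun ⟨n, hn⟩ => h n hn, ?_⟩
  rintro h n rfl
  exact (finite_singleton n).compl_mem_cofinite |> h |> Ultrafilter.mem_pure.1 <| rfl

theorem IsFreeUltrafilter.infinite_of_mem {u : Ultrafilter ℕ} (hu : IsFreeUltrafilter u)
    {A : Set ℕ} (hA : A ∈ u) : A.Infinite := fun hfin =>
  Ultrafilter.compl_notMem_iff.2 hA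
    (isFreeUltrafilter_iff_le_cofinite.1 hu hfin.compl_mem_cofinite)

theorem Set.Infinite.exists_isFreeUltrafilter_mem {A : Set ℕ} (hA : A.Infinite) :
    ∃ u : Ultrafilter ℕ, A ∈ u ∧ IsFreeUltrafilter u := by
  have := hA.cofinite_inf_principal_neBot
  refine ⟨Ultrafilter.of (cofinite ⊓ 𝓟 A), ?_, isFreeUltrafilter_iff_le_cofinite.2 ?_⟩
  · exact le_principal_iff.1 ((Ultrafilter.of_le _).trans inf_le_right)
  · exact (Ultrafilter.of_le _).trans inf_le_left

theorem IsHS.pure_mem {Y : Set (Ultrafilter ℕ)} (hY : IsHS Y) (n : ℕ) : pure n ∈ Y := by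
  obtain ⟨u, -, rfl⟩ := hY
  exact Or.inl ⟨n, rfl⟩

theorem exists_isHS_superset {R : Set (Ultrafilter ℕ)} (hR : #R ≤ 𝔠) :
    ∃ Y, IsHS Y ∧ R ⊆ Y := by
  obtain ⟨f, hf_inj, hf_mem⟩ := exists_injective_forall_mem
    (fun v : {v // v ∈ R ∧ IsFreeUltrafilter v} => {A : Set ℕ | A ∈ v.1}) fun v =>
      calc #{v // v ∈ R ∧ IsFreeUltrafilter v} ≤ #R := mk_le_mk_of_subset fun v hv => hv.1
        _ ≤ #(Set ℕ) := hR.trans_eq mk_set_nat.symm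
        _ ≤ _ := v.1.mk_set_le_mk_setOf_mem
  have hdefault : ∀ A : Set ℕ, ∃ u : Ultrafilter ℕ, A.Infinite → A ∈ u ∧ IsFreeUltrafilter u :=
    fun A => by
      by_cases hA : A.Infinite
      · exact (hA.exists_isFreeUltrafilter_mem).imp fun u hu _ => hu
      · exact ⟨pure 0, fun h => absurd h hA⟩
  choose u₀ hu₀ using hdefault
  have hextend : ∀ v, extend f Subtype.val u₀ (f v) = v.1 := hf_inj.extend_apply _ _
  refine ⟨_, ⟨extend f Subtype.val u₀, fun A hA => ?_, rfl⟩, fun v hv => ?_⟩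
  · by_cases hrange : ∃ v, f v = A
    · obtain ⟨v, rfl⟩ := hrange
      rw [hextend]
      exact ⟨hf_mem v, v.2.2⟩
    · rw [extend_apply' _ _ _ hrange]
      exact hu₀ A hA
  · by_cases hfree : IsFreeUltrafilter v
    · exact Or.inr ⟨f ⟨v, hv, hfree⟩, hfree.infinite_of_mem (hf_mem ⟨v, hv, hfree⟩),
        (hextend ⟨v, hv, hfree⟩).symm⟩
    · obtain ⟨n, rfl⟩ : ∃ n, v = pure n := by simpa [IsFreeUltrafilter] using hfree
      exact Or.inl ⟨n, rfl⟩

theorem DenseRange.codRestrict {α X : Type*} [TopologicalSpace X] {f : α → X} (hf : DenseRange f)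
    {Y : Set X} (h : ∀ a, f a ∈ Y) : DenseRange (codRestrict f Y h) :=
  Subtype.dense_iff.2 <| by
    rw [← range_comp]
    exact hf.closure_range ▸ subset_univ _

theorem Pseudocompact.of_denseRange {X β : Type*} [TopologicalSpace X] {e : β → X}
    (he : DenseRange e) (h : ∀ x : ℕ → β, ∃ p, MapClusterPt p atTop (e ∘ x)) :
    Pseudocompact X := by
  intro f hf
  by_contra! hunbdd
  have hlarge : ∀ k : ℕ, ∃ b, (k : ℝ) < |f (e b)| := fun k =>
    he.exists_mem_open (isOpen_lt continuous_const hf.abs) (hunbdd k)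
  choose x hx using hlarge
  obtain ⟨p, hp⟩ := h x
  have hnear : ∃ᶠ k in atTop, |f (e (x k))| < |f p| + 1 :=
    hp.frequently ((isOpen_lt hf.abs continuous_const).mem_nhds (lt_add_one |f p|))
  obtain ⟨k, hk_near, hk_large⟩ :=
    (hnear.and_eventually (tendsto_natCast_atTop_atTop.eventually_gt_atTop (|f p| + 1))).exists
  linarith [hx k]

theorem Ultrafilter.tendsto_pure_comp_map {α β : Type*} (w : Ultrafilter β) (m : β → α) :
    Tendsto (fun b => pure (m b) : β → Ultrafilter α) w (𝓝 (w.map m)) :=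
  (tendsto_pure_self (w.map m)).comp (by rw [Ultrafilter.coe_map]; exact tendsto_map)

theorem pseudocompact_prod_of_map_mem {Y : Set (Ultrafilter ℕ)} (hpure : ∀ n, pure n ∈ Y)
    (hmap : ∀ m : ℕ → ℕ, (hyperfilter ℕ).map m ∈ Y) : Pseudocompact (Y × Y) := by
  have he := (denseRange_pure.codRestrict hpure).prodMap (denseRange_pure.codRestrict hpure)
  refine Pseudocompact.of_denseRange he fun x =>
    ⟨(⟨_, hmap (Prod.fst ∘ x)⟩, ⟨_, hmap (Prod.snd ∘ x)⟩), ?_⟩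
  refine (Tendsto.mapClusterPt ?_).mono Nat.hyperfilter_le_atTop
  exact (tendsto_subtype_rng.2 (Ultrafilter.tendsto_pure_comp_map _ _)).prodMk_nhds
    (tendsto_subtype_rng.2 (Ultrafilter.tendsto_pure_comp_map _ _))

/-- There is a space `Y` in the class HS whose square is pseudocompact. -/
theorem stmt14 : ∃ Y : Set (Ultrafilter ℕ), IsHS Y ∧ Pseudocompact (↥Y × ↥Y) := by
  obtain ⟨Y, hY, hmap⟩ := exists_isHS_superset (R := range fun m : ℕ → ℕ => (hyperfilter ℕ).map m)
    (mk_range_le.trans (by simp : #(ℕ → ℕ) ≤ 𝔠))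
  exact ⟨Y, hY, pseudocompact_prod_of_map_mem hY.pure_mem fun m => hmap ⟨m, rfl⟩⟩
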